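/- (Uniform one-dimensional subspace RIP.) Let X be a subspace of R^N with orthonormal basis U, and X1, X2 subspaces of X. Suppose Φ ∈ R^{n×N} satisfies 1 − δ < s_min(ΦU)^2 ≤ s_max(ΦU)^2 < 1 + δ with δ ∈ (0,1/4). Then there is a universal constant C > 0 such that for every nonzero u ∈ X1, letting Y2 = ΦX2, one has |aff(Y2, span(Φu))^2 − aff(X2, span(u))^2| ≤ C·(1 − aff(X2, span(u))^2)·δ. -/

import Mathlib

/-!
On `X` the map `Φ` is a near-isometry: `Φ U` is one, and `U` maps Euclidean space isometrically
onto `X`. The affinity of `span u` with `X₂` is read off from the residual `u - P_{X₂} u`, the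
shortest vector from `X₂` to `u`; likewise `Φ u - P_{Φ X₂} (Φ u)` is the shortest vector from
`Φ X₂` to `Φ u`. Comparing each residual with the image, resp. a preimage, of the other shows that
the squared residual changes by a factor in `[1 - δ, 1 + δ]`, as does `‖u‖²`, and for `δ ≤ 1/3`
the ratio `1 - aff²` of the two then moves by at most `3δ` times itself.
-/
noncomputable section
open scoped RealInnerProductSpace Matrix

/-- The `j`-th column of a matrix, as a vector in Euclidean space. -/
def col {m k : ℕ} (A : Matrix (Fin m) (Fin k) ℝ) (j : Fin k) : EuclideanSpace ℝ (Fin m) :=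
  WithLp.toLp 2 (fun i => A i j)

/-- Orthogonal projection onto a subspace, as an endomorphism. -/
def projE {m : ℕ} (K : Submodule ℝ (EuclideanSpace ℝ (Fin m))) :
    EuclideanSpace ℝ (Fin m) →ₗ[ℝ] EuclideanSpace ℝ (Fin m) :=
  K.subtype ∘ₗ K.orthogonalProjectionOnto.toLinearMap

/-- Frobenius norm of a real matrix. -/
def frob {m k : ℕ} (A : Matrix (Fin m) (Fin k) ℝ) : ℝ :=
  Real.sqrt (∑ i, ∑ j, (A i j) ^ 2)

/-- Operator (spectral) norm of a real matrix, w.r.t. Euclidean norms. -/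
def opn {m k : ℕ} (A : Matrix (Fin m) (Fin k) ℝ) : ℝ :=
  ‖LinearMap.toContinuousLinearMap (Matrix.toEuclideanLin A)‖

theorem abs_div_sub_div_le_of_near {δ a b c d : ℝ} (hδ0 : 0 ≤ δ) (hδ : δ ≤ 1 / 3)
    (ha : 0 ≤ a) (hb : 0 < b) (hc₁ : (1 - δ) * a ≤ c) (hc₂ : c ≤ (1 + δ) * a)
    (hd₁ : (1 - δ) * b ≤ d) (hd₂ : d ≤ (1 + δ) * b) :
    |c / d - a / b| ≤ 3 * δ * (a / b) := by
  have hd : 0 < d := by nlinarith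
  rw [div_sub_div _ _ hd.ne' hb.ne', abs_div, abs_of_pos (mul_pos hd hb),
    div_le_iff₀ (mul_pos hd hb), abs_le]
  have had : 0 ≤ δ * a := mul_nonneg hδ0 ha
  constructor
  · field_simp
    nlinarith [mul_le_mul_of_nonneg_left hd₂ ha, mul_le_mul_of_nonneg_left hc₁ hb.le,
      mul_le_mul_of_nonneg_left hd₁ had]
  · field_simp
    nlinarith [mul_le_mul_of_nonneg_left hd₂ ha, mul_le_mul_of_nonneg_left hc₂ hb.le,
      mul_le_mul_of_nonneg_left hd₁ had]

section InnerProductSpace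

variable {E F G : Type*} [NormedAddCommGroup E] [InnerProductSpace ℝ E]
  [NormedAddCommGroup F] [InnerProductSpace ℝ F] [NormedAddCommGroup G] [InnerProductSpace ℝ G]

theorem Submodule.norm_sub_starProjection_le (K : Submodule ℝ E) [K.HasOrthogonalProjection]
    (y : E) {x : E} (hx : x ∈ K) : ‖y - K.starProjection y‖ ≤ ‖y - x‖ := by
  rw [K.starProjection_minimal]
  exact ciInf_le ⟨0, Set.forall_mem_range.2 fun _ => norm_nonneg _⟩ (⟨x, hx⟩ : K)

theorem Submodule.norm_sq_eq_norm_sq_starProjection_add (K : Submodule ℝ E)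
    [K.HasOrthogonalProjection] (v : E) :
    ‖v‖ ^ 2 = ‖K.starProjection v‖ ^ 2 + ‖v - K.starProjection v‖ ^ 2 := by
  rw [← K.starProjection_orthogonal_val]
  exact K.norm_sq_eq_add_norm_sq_starProjection v

/-- `aff(K, span v)`. -/
def affinity (K : Submodule ℝ E) [K.HasOrthogonalProjection] (v : E) : ℝ :=
  ‖K.starProjection v‖ / ‖v‖

theorem one_sub_affinity_sq (K : Submodule ℝ E) [K.HasOrthogonalProjection] {v : E}
    (hv : v ≠ 0) : 1 - affinity K v ^ 2 = ‖v - K.starProjection v‖ ^ 2 / ‖v‖ ^ 2 := by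
  have hv' : ‖v‖ ≠ 0 := norm_ne_zero_iff.2 hv
  rw [affinity, div_pow, eq_div_iff (pow_ne_zero 2 hv'), sub_mul, one_mul,
    div_mul_cancel₀ _ (pow_ne_zero 2 hv'), K.norm_sq_eq_norm_sq_starProjection_add v]
  ring

/-- The restricted isometry property of `T` on `X` with constant `δ`. -/
def NearIsometryOn (T : E →ₗ[ℝ] F) (X : Submodule ℝ E) (δ : ℝ) : Prop :=
  ∀ x ∈ X, (1 - δ) * ‖x‖ ^ 2 ≤ ‖T x‖ ^ 2 ∧ ‖T x‖ ^ 2 ≤ (1 + δ) * ‖x‖ ^ 2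

namespace NearIsometryOn

variable {T : E →ₗ[ℝ] F} {X : Submodule ℝ E} {δ : ℝ}

theorem top_of_unit_sphere (h : ∀ x, ‖x‖ = 1 → 1 - δ ≤ ‖T x‖ ^ 2 ∧ ‖T x‖ ^ 2 ≤ 1 + δ) :
    NearIsometryOn T ⊤ δ := by
  intro x _
  rcases eq_or_ne x 0 with rfl | hx
  · simp
  obtain ⟨h₁, h₂⟩ := h (‖x‖⁻¹ • x) (norm_smul_inv_norm hx)
  have hscale : ‖T (‖x‖⁻¹ • x)‖ ^ 2 = ‖T x‖ ^ 2 / ‖x‖ ^ 2 := by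
    rw [map_smul, norm_smul, norm_inv, norm_norm, mul_pow, inv_pow, inv_mul_eq_div]
  have hx2 : 0 < ‖x‖ ^ 2 := by positivity
  rw [hscale, le_div_iff₀ hx2] at h₁
  rw [hscale, div_le_iff₀ hx2] at h₂
  exact ⟨by linarith, by linarith⟩

theorem range_of_comp_isometry {V : G →ₗ[ℝ] E} (hV : ∀ c, ‖V c‖ = ‖c‖)
    (h : NearIsometryOn (T ∘ₗ V) ⊤ δ) : NearIsometryOn T (LinearMap.range V) δ := by
  rintro _ ⟨c, rfl⟩
  simpa [hV] using h c trivial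

theorem norm_sub_starProjection_map_sq_bounds (h : NearIsometryOn T X δ) (hδ : δ ≤ 1)
    {X₂ : Submodule ℝ E} [X₂.HasOrthogonalProjection] [(X₂.map T).HasOrthogonalProjection]
    (hX₂ : X₂ ≤ X) {u : E} (hu : u ∈ X) :
    (1 - δ) * ‖u - X₂.starProjection u‖ ^ 2 ≤ ‖T u - (X₂.map T).starProjection (T u)‖ ^ 2 ∧
      ‖T u - (X₂.map T).starProjection (T u)‖ ^ 2 ≤ (1 + δ) * ‖u - X₂.starProjection u‖ ^ 2 := by
  have hP : X₂.starProjection u ∈ X₂ := X₂.starProjection_apply_mem u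
  obtain ⟨z, hz, hTz⟩ := (X₂.map T).starProjection_apply_mem (T u)
  have h1δ : 0 ≤ 1 - δ := by linarith
  constructor
  · calc (1 - δ) * ‖u - X₂.starProjection u‖ ^ 2 ≤ (1 - δ) * ‖u - z‖ ^ 2 := by
          gcongr
          exact X₂.norm_sub_starProjection_le u hz
      _ ≤ ‖T (u - z)‖ ^ 2 := (h _ (X.sub_mem hu (hX₂ hz))).1
      _ = ‖T u - (X₂.map T).starProjection (T u)‖ ^ 2 := by rw [map_sub, hTz]
  · calc ‖T u - (X₂.map T).starProjection (T u)‖ ^ 2 ≤ ‖T u - T (X₂.starProjection u)‖ ^ 2 := by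
          gcongr
          exact (X₂.map T).norm_sub_starProjection_le _ (Submodule.mem_map_of_mem hP)
      _ = ‖T (u - X₂.starProjection u)‖ ^ 2 := by rw [map_sub]
      _ ≤ (1 + δ) * ‖u - X₂.starProjection u‖ ^ 2 := (h _ (X.sub_mem hu (hX₂ hP))).2

theorem abs_affinity_map_sq_sub_le (h : NearIsometryOn T X δ) (hδ0 : 0 ≤ δ) (hδ : δ ≤ 1 / 3)
    {X₂ : Submodule ℝ E} [X₂.HasOrthogonalProjection] [(X₂.map T).HasOrthogonalProjection]
    (hX₂ : X₂ ≤ X) {u : E} (hu : u ∈ X) (hu0 : u ≠ 0) :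
    |affinity (X₂.map T) (T u) ^ 2 - affinity X₂ u ^ 2| ≤ 3 * (1 - affinity X₂ u ^ 2) * δ := by
  obtain ⟨hTu₁, hTu₂⟩ := h u hu
  have hTu0 : T u ≠ 0 := by
    intro hTu
    rw [hTu, norm_zero] at hTu₁
    have : 0 < ‖u‖ ^ 2 := by positivity
    nlinarith
  obtain ⟨hr₁, hr₂⟩ := h.norm_sub_starProjection_map_sq_bounds (by linarith) hX₂ hu
  calc |affinity (X₂.map T) (T u) ^ 2 - affinity X₂ u ^ 2|
      = |(1 - affinity (X₂.map T) (T u) ^ 2) - (1 - affinity X₂ u ^ 2)| := by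
        rw [abs_sub_comm]; ring_nf
    _ ≤ 3 * δ * (1 - affinity X₂ u ^ 2) := by
        rw [one_sub_affinity_sq _ hu0, one_sub_affinity_sq _ hTu0]
        exact abs_div_sub_div_le_of_near hδ0 hδ (sq_nonneg _) (by positivity) hr₁ hr₂ hTu₁ hTu₂
    _ = 3 * (1 - affinity X₂ u ^ 2) * δ := by ring

end NearIsometryOn

end InnerProductSpace

theorem Matrix.toEuclideanLin_mul {𝕜 l m k : Type*} [RCLike 𝕜] [Fintype m] [DecidableEq m]
    [Fintype k] [DecidableEq k] (A : Matrix l m 𝕜) (B : Matrix m k 𝕜) :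
    Matrix.toEuclideanLin (A * B) = Matrix.toEuclideanLin A ∘ₗ Matrix.toEuclideanLin B := by
  ext x : 1
  simp [Matrix.toLpLin_apply, Matrix.mulVec_mulVec]

theorem toEuclideanLin_eq_sum_smul_col {m k : ℕ} (A : Matrix (Fin m) (Fin k) ℝ)
    (c : EuclideanSpace ℝ (Fin k)) : Matrix.toEuclideanLin A c = ∑ j, c j • col A j := by
  ext i
  simp [Matrix.toLpLin_apply, Matrix.mulVec, dotProduct, col, WithLp.ofLp_sum,
    Finset.sum_apply, mul_comm]

theorem toEuclideanLin_single_one {m k : ℕ} (A : Matrix (Fin m) (Fin k) ℝ) (j : Fin k) :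
    Matrix.toEuclideanLin A (EuclideanSpace.single j 1) = col A j := by
  simp [toEuclideanLin_eq_sum_smul_col, ite_smul]

theorem range_toEuclideanLin {m k : ℕ} (A : Matrix (Fin m) (Fin k) ℝ) :
    LinearMap.range (Matrix.toEuclideanLin A) = Submodule.span ℝ (Set.range (col A)) := by
  apply le_antisymm
  · rintro _ ⟨c, rfl⟩
    rw [toEuclideanLin_eq_sum_smul_col]
    exact Submodule.sum_mem _ fun j _ => Submodule.smul_mem _ _ (Submodule.subset_span ⟨j, rfl⟩)
  · rw [Submodule.span_le]
    rintro _ ⟨j, rfl⟩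
    exact ⟨_, toEuclideanLin_single_one A j⟩

theorem Orthonormal.norm_sq_sum_smul {E ι : Type*} [NormedAddCommGroup E]
    [InnerProductSpace ℝ E] [Fintype ι] {v : ι → E} (hv : Orthonormal ℝ v) (c : ι → ℝ) :
    ‖∑ i, c i • v i‖ ^ 2 = ∑ i, c i ^ 2 := by
  rw [← real_inner_self_eq_norm_sq, hv.inner_sum]
  simp [sq]

theorem norm_toEuclideanLin_of_orthonormal_col {m k : ℕ} {U : Matrix (Fin m) (Fin k) ℝ}
    (hU : Orthonormal ℝ (col U)) (c : EuclideanSpace ℝ (Fin k)) :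
    ‖Matrix.toEuclideanLin U c‖ = ‖c‖ := by
  have hsq : ‖Matrix.toEuclideanLin U c‖ ^ 2 = ‖c‖ ^ 2 := by
    simp [toEuclideanLin_eq_sum_smul_col, hU.norm_sq_sum_smul, EuclideanSpace.norm_sq_eq]
  exact (pow_left_inj₀ (norm_nonneg _) (norm_nonneg _) two_ne_zero).1 hsq

theorem nearIsometryOn_span_col {n N d : ℕ} {δ : ℝ} {U : Matrix (Fin N) (Fin d) ℝ}
    (hU : Orthonormal ℝ (col U)) {Φ : Matrix (Fin n) (Fin N) ℝ}
    (hΦ : ∀ x : EuclideanSpace ℝ (Fin d), ‖x‖ = 1 →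
      1 - δ ≤ ‖Matrix.toEuclideanLin (Φ * U) x‖ ^ 2 ∧
        ‖Matrix.toEuclideanLin (Φ * U) x‖ ^ 2 ≤ 1 + δ) :
    NearIsometryOn (Matrix.toEuclideanLin Φ) (Submodule.span ℝ (Set.range (col U))) δ := by
  rw [← range_toEuclideanLin]
  refine .range_of_comp_isometry (norm_toEuclideanLin_of_orthonormal_col hU) ?_
  rw [← Matrix.toEuclideanLin_mul]
  exact .top_of_unit_sphere hΦ

/-- Uniform one-dimensional subspace RIP: there is a universal constant `C > 0` such that
for any near-isometry `Φ` on `X` (with `δ ∈ (0,1/4)`) and any nonzero `u ∈ X1 ⊆ X`,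
the affinity of `span(u)` with `X2 ⊆ X` is nearly preserved. -/
theorem uniform_line_subspace_RIP :
    ∃ C : ℝ, 0 < C ∧
      ∀ (N n d : ℕ) (δ : ℝ), δ ∈ Set.Ioo (0 : ℝ) (1/4) →
      ∀ (X X1 X2 : Submodule ℝ (EuclideanSpace ℝ (Fin N))), X1 ≤ X → X2 ≤ X →
      ∀ (U : Matrix (Fin N) (Fin d) ℝ),
        Orthonormal ℝ (col U) → Submodule.span ℝ (Set.range (col U)) = X →
      ∀ (Φ : Matrix (Fin n) (Fin N) ℝ),
        (∀ x : EuclideanSpace ℝ (Fin d), ‖x‖ = 1 →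
          1 - δ < ‖Matrix.toEuclideanLin (Φ * U) x‖ ^ 2 ∧
          ‖Matrix.toEuclideanLin (Φ * U) x‖ ^ 2 < 1 + δ) →
      ∀ u ∈ X1, u ≠ 0 →
        |(‖projE (X2.map (Matrix.toEuclideanLin Φ)) (Matrix.toEuclideanLin Φ u)‖
            / ‖Matrix.toEuclideanLin Φ u‖) ^ 2
          - (‖projE X2 u‖ / ‖u‖) ^ 2|
          ≤ C * (1 - (‖projE X2 u‖ / ‖u‖) ^ 2) * δ := by
  
  refine ⟨3, by norm_num, ?_⟩
  rintro N n d δ ⟨hδ0, hδ⟩ X X1 X2 hX1 hX2 U hU rfl Φ hΦ u hu hu0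
  have hRIP := nearIsometryOn_span_col hU fun x hx => ⟨(hΦ x hx).1.le, (hΦ x hx).2.le⟩
  exact hRIP.abs_affinity_map_sq_sub_le hδ0.le (by linarith) hX2 (hX1 hu) hu0
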